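/- arXiv:2407.20969 — 7 statements merged into one kernel-verified Lean document; each statement's English description precedes it below -/
import Mathlib

section
/- Let F be a finite field, s a positive natural number, y, y' ∈ F^s with y ≠ y', and t, t' ∈ F. Then the number of pairs (c, d) ∈ F × F such that h_{c,d}(y) = t and h_{c,d}(y') = t' is at most s. -/
/-!
Subtracting the two tag equations eliminates `d` and leaves `c` as a root of
`∑ⱼ (yⱼ - y'ⱼ) X^(j+1) - (t - t')`, a nonzero polynomial of degree at most `s`; since `d` is
then determined by `c`, there are at most `s` pairs `(c, d)`.
-/

open Polynomial

namespace Polynomial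

theorem natCard_isRoot_le_natDegree {R : Type*} [CommRing R] [IsDomain R] {p : R[X]}
    (hp : p ≠ 0) : Nat.card {x // p.IsRoot x} ≤ p.natDegree := by
  classical
  calc Nat.card {x // p.IsRoot x} = Nat.card p.roots.toFinset := by
        simp only [Multiset.mem_toFinset, mem_roots hp]
    _ = p.roots.toFinset.card := Nat.card_eq_finsetCard _
    _ ≤ Multiset.card p.roots := p.roots.toFinset_card_le
    _ ≤ p.natDegree := p.card_roots'

end Polynomial

section HashPoly

variable {R : Type*} {s : ℕ}

/-- `h_{c,d}(y) = d + (hashPoly y).eval c`. -/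
noncomputable def hashPoly [Semiring R] (y : Fin s → R) : R[X] :=
  ∑ j : Fin s, C (y j) * X ^ (j.1 + 1)

theorem eval_hashPoly [CommSemiring R] (y : Fin s → R) (c : R) :
    (hashPoly y).eval c = ∑ j : Fin s, c ^ (j.1 + 1) * y j := by
  simp only [hashPoly, eval_finsetSum, eval_mul, eval_C, eval_pow, eval_X, mul_comm]

theorem hashPoly_sub [Ring R] (y y' : Fin s → R) :
    hashPoly (y - y') = hashPoly y - hashPoly y' := by
  simp only [hashPoly, Pi.sub_apply, C_sub, sub_mul, Finset.sum_sub_distrib]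

theorem coeff_hashPoly_succ [Semiring R] (y : Fin s → R) (j : Fin s) :
    (hashPoly y).coeff (j.1 + 1) = y j := by
  simp only [hashPoly, finsetSum_coeff, coeff_C_mul_X_pow, add_left_inj, Fin.val_inj,
    Finset.sum_ite_eq, Finset.mem_univ, if_true]

theorem natDegree_hashPoly_le [Semiring R] (y : Fin s → R) : (hashPoly y).natDegree ≤ s :=
  natDegree_sum_le_of_forall_le _ _ fun j _ =>
    (natDegree_C_mul_X_pow_le _ _).trans j.isLt

end HashPoly

theorem dske_message_tag_collision_count_general {F : Type*} [Field F]
    (s : ℕ) (y y' : Fin s → F) (hyy' : y ≠ y') (t t' : F) :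
    Nat.card {cd : F × F //
      cd.2 + ∑ j : Fin s, cd.1 ^ (j.1 + 1) * y j = t ∧
      cd.2 + ∑ j : Fin s, cd.1 ^ (j.1 + 1) * y' j = t'} ≤ s := by
  set p := hashPoly (y - y') - C (t - t')
  obtain ⟨j, hj⟩ := Function.ne_iff.mp hyy'
  have hp : p ≠ 0 := fun h => hj <| sub_eq_zero.mp <| by
    simpa [p, coeff_hashPoly_succ, coeff_C] using congrArg (coeff · (j.1 + 1)) h
  have hroot (cd : F × F) (h : cd.2 + (hashPoly y).eval cd.1 = t ∧
      cd.2 + (hashPoly y').eval cd.1 = t') : p.IsRoot cd.1 := by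
    simp only [p, IsRoot, eval_sub, eval_C, hashPoly_sub, ← h.1, ← h.2]
    ring
  have : Finite {c // p.IsRoot c} := (finite_setOfPred_isRoot hp).to_subtype
  simp only [← eval_hashPoly]
  calc _ ≤ Nat.card {c // p.IsRoot c} :=
        Nat.card_le_card_of_injective (fun cd => ⟨cd.1.1, hroot cd.1 cd.2⟩) fun cd cd' hc => by
          have hc : cd.1.1 = cd'.1.1 := congrArg Subtype.val hc
          refine Subtype.ext (Prod.ext hc ?_)
          rw [← add_left_inj, cd.2.1, hc, cd'.2.1]
    _ ≤ p.natDegree := natCard_isRoot_le_natDegree hp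
    _ ≤ s := (natDegree_sub_le _ _).trans (max_le (natDegree_hashPoly_le _) (by simp))

/-- For a finite field `F`, a positive `s`, distinct messages `y ≠ y'` in `F^s`
and tags `t, t' ∈ F`, the number of parameter pairs `(c, d) ∈ F × F` with
`h_{c,d}(y) = t` and `h_{c,d}(y') = t'`, where
`h_{c,d}(y) = d + ∑_{j=1}^s c^j yⱼ`, is at most `s`. -/
theorem dske_message_tag_collision_count {F : Type*} [Field F] [Fintype F]
    (s : ℕ) (hs : 0 < s) (y y' : Fin s → F) (hyy' : y ≠ y') (t t' : F) :
    Nat.card {cd : F × F //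
      cd.2 + ∑ j : Fin s, cd.1 ^ (j.1 + 1) * y j = t ∧
      cd.2 + ∑ j : Fin s, cd.1 ^ (j.1 + 1) * y' j = t'} ≤ s :=
  dske_message_tag_collision_count_general s y y' hyy' t t'
end

section
/- Let F be a finite field, m a positive natural number, (e, S), (e', S') ∈ F × F^m with (e, S) ≠ (e', S'), and o, o' ∈ F. Then the number of pairs (c, d) ∈ F × F such that h'_{c,d,e}(S) = o and h'_{c,d,e'}(S') = o' is at most m + 1. -/
/-! Subtracting the two tag equations eliminates `d` and leaves `P(c) = o - o'` for the nonzero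
polynomial `P = (e - e') X + ∑ⱼ (Sⱼ - S'ⱼ) X^(j+2)` of degree at most `m + 1`, which has positive
degree because it has no constant term. So `c` is one of at most `m + 1` roots of `P - (o - o')`,
and `c` determines `d`. -/

open Polynomial

namespace DSKE

variable {R : Type*} [CommRing R] {m : ℕ}

/-- `h'_{c,d,e}(S) - d` as a polynomial in `c`. -/
noncomputable def secretPoly (e : R) (S : Fin m → R) : R[X] :=
  C e * X + ∑ j : Fin m, C (S j) * X ^ (j.1 + 2)

lemma add_eval_secretPoly (c d e : R) (S : Fin m → R) :
    d + (secretPoly e S).eval c = d + c * e + ∑ j : Fin m, c ^ (j.1 + 2) * S j := by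
  simp only [secretPoly, eval_add, eval_mul, eval_C, eval_X, eval_finsetSum, eval_pow, add_assoc,
    mul_comm e, mul_comm (S _)]

lemma secretPoly_sub (e e' : R) (S S' : Fin m → R) :
    secretPoly e S - secretPoly e' S' = secretPoly (e - e') (S - S') := by
  simp only [secretPoly, Pi.sub_apply, C_sub, sub_mul, Finset.sum_sub_distrib]
  ring

lemma coeff_secretPoly_one (e : R) (S : Fin m → R) : (secretPoly e S).coeff 1 = e := by
  simp [secretPoly, coeff_X_pow]

lemma coeff_secretPoly_add_two (e : R) (S : Fin m → R) (j : Fin m) :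
    (secretPoly e S).coeff (j.1 + 2) = S j := by
  simp [secretPoly, coeff_X_pow, Fin.val_inj]

lemma natDegree_secretPoly_le (e : R) (S : Fin m → R) : (secretPoly e S).natDegree ≤ m + 1 := by
  refine natDegree_add_le_of_degree_le
    ((natDegree_C_mul_le e X).trans (natDegree_X_le.trans (by omega))) ?_
  refine natDegree_sum_le_of_forall_le _ _ fun j _ => (natDegree_C_mul_X_pow_le _ _).trans ?_
  omega

lemma degree_secretPoly_pos {e : R} {S : Fin m → R} (h : (e, S) ≠ 0) :
    0 < (secretPoly e S).degree := by
  by_cases he : e = 0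
  · obtain ⟨j, hj⟩ : ∃ j, S j ≠ 0 := by
      by_contra! hS
      exact h (Prod.ext he (funext hS))
    refine lt_of_lt_of_le ?_ (le_degree_of_ne_zero (n := j.1 + 2) ?_)
    · exact_mod_cast Nat.succ_pos (j.1 + 1)
    · rwa [coeff_secretPoly_add_two]
  · exact lt_of_lt_of_le (by decide)
      (le_degree_of_ne_zero (n := 1) (by rwa [coeff_secretPoly_one]))

lemma card_add_eval_eq_and_add_eval_eq (p q : R[X]) (o o' : R) :
    Nat.card {cd : R × R // cd.2 + p.eval cd.1 = o ∧ cd.2 + q.eval cd.1 = o'} =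
      Nat.card {c : R // (p - q).eval c = o - o'} :=
  Nat.card_congr
    { toFun := fun cd => ⟨cd.1.1, by
        rw [eval_sub]; linear_combination cd.2.1 - cd.2.2⟩
      invFun := fun c => ⟨(c.1, o - p.eval c.1), by
        have := c.2; rw [eval_sub] at this; exact ⟨by ring, by linear_combination -this⟩⟩
      left_inv := fun cd => Subtype.ext (Prod.ext rfl (by linear_combination -cd.2.1))
      right_inv := fun _ => rfl }

lemma card_eval_eq_le [IsDomain R] {p : R[X]} (hp : 0 < p.degree) (a : R) :
    Nat.card {c : R // p.eval c = a} ≤ p.natDegree := by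
  classical
  have hpa : p - C a ≠ 0 := sub_ne_zero.2 fun h => (h ▸ hp).not_ge degree_C_le
  calc Nat.card {c : R // p.eval c = a}
      ≤ Nat.card (p - C a).roots.toFinset :=
        Nat.card_le_card_of_injective (fun c => ⟨c.1, by simp [mem_roots hpa, c.2]⟩)
          fun c c' h => Subtype.ext (congrArg Subtype.val h :)
    _ = (p - C a).roots.toFinset.card := Nat.card_eq_finsetCard _
    _ ≤ Multiset.card (p - C a).roots := Multiset.toFinset_card_le _
    _ ≤ p.natDegree := card_roots_sub_C' hp

end DSKE

theorem dske_secret_tag_collision_count_general {F : Type*} [Field F]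
    (m : ℕ) (e e' : F) (S S' : Fin m → F)
    (hne : (e, S) ≠ (e', S')) (o o' : F) :
    Nat.card {cd : F × F //
      cd.2 + cd.1 * e + ∑ j : Fin m, cd.1 ^ (j.1 + 2) * S j = o ∧
      cd.2 + cd.1 * e' + ∑ j : Fin m, cd.1 ^ (j.1 + 2) * S' j = o'} ≤ m + 1 := by
  simp only [← DSKE.add_eval_secretPoly]
  rw [DSKE.card_add_eval_eq_and_add_eval_eq, DSKE.secretPoly_sub]
  exact (DSKE.card_eval_eq_le (DSKE.degree_secretPoly_pos (sub_ne_zero.2 hne)) (o - o')).trans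
    (DSKE.natDegree_secretPoly_le _ _)

/-- For a finite field `F`, a positive `m`, pairs `(e, S) ≠ (e', S')` in `F × F^m` and
tags `o, o' ∈ F`, the number of parameter pairs `(c, d) ∈ F × F` such that
`h'_{c,d,e}(S) = o` and `h'_{c,d,e'}(S') = o'`, where
`h'_{c,d,e}(S) = d + c·e + ∑_{j=1}^m c^{j+1} Sⱼ`, is at most `m + 1`. -/
theorem dske_secret_tag_collision_count {F : Type*} [Field F] [Fintype F]
    (m : ℕ) (hm : 0 < m) (e e' : F) (S S' : Fin m → F)
    (hne : (e, S) ≠ (e', S')) (o o' : F) :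
    Nat.card {cd : F × F //
      cd.2 + cd.1 * e + ∑ j : Fin m, cd.1 ^ (j.1 + 2) * S j = o ∧
      cd.2 + cd.1 * e' + ∑ j : Fin m, cd.1 ^ (j.1 + 2) * S' j = o'} ≤ m + 1 :=
  dske_secret_tag_collision_count_general m e e' S S' hne o o'
end

section
/- Let F be a finite field, m a positive natural number, S ∈ F^m fixed, and let (Δ_c, Δ_d, Δ_e, Δ_S) ∈ F × F × F × F^m be a fixed shift that is not the zero tuple. Then the number of triples (c, d, e) ∈ F³ such that h'_{c+Δ_c, d+Δ_d, e+Δ_e}(S + Δ_S) = h'_{c,d,e}(S) is at most (m + 1)·|F|². -/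
/-!
Writing `h'` for the tag, the shifted tag minus the original one is `Δc · e + g(c)` for some
function `g` of `c` alone. If `Δc ≠ 0` this pins down `e` given `(c, d)`, leaving at most `|F|²`
triples. If `Δc = 0`, `h'` is additive in `(d, e, S)` for fixed `c`, so the difference is
`h'_{c, Δd, Δe}(ΔS)`: a nonzero polynomial in `c` of degree at most `m + 1`, with at most `m + 1`
roots, while `d` and `e` are free.
-/

open Polynomial Finset

section SecretTag

variable {R : Type*} [CommRing R] {m : ℕ}

/-- The secret-authenticating hash `h'_{c,d,e}(S)`; the index shift `j + 2` accounts for `Fin m`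
starting at `0`. -/
def secretTag (c d e : R) (S : Fin m → R) : R :=
  d + c * e + ∑ j : Fin m, c ^ (j.1 + 2) * S j

lemma secretTag_add (c d d' e e' : R) (S S' : Fin m → R) :
    secretTag c (d + d') (e + e') (S + S') = secretTag c d e S + secretTag c d' e' S' := by
  simp only [secretTag, Pi.add_apply, mul_add, sum_add_distrib]
  ring

noncomputable def secretTagPoly (d e : R) (S : Fin m → R) : R[X] :=
  C d + C e * X + ∑ j : Fin m, C (S j) * X ^ (j.1 + 2)

lemma eval_secretTagPoly (c d e : R) (S : Fin m → R) :
    (secretTagPoly d e S).eval c = secretTag c d e S := by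
  simp only [secretTagPoly, secretTag, eval_add, eval_mul, eval_C, eval_X, eval_finsetSum,
    eval_pow, mul_comm]

lemma coeff_secretTagPoly_zero (d e : R) (S : Fin m → R) :
    (secretTagPoly d e S).coeff 0 = d := by
  simp [secretTagPoly, finsetSum_coeff, coeff_X_pow]

lemma coeff_secretTagPoly_one (d e : R) (S : Fin m → R) :
    (secretTagPoly d e S).coeff 1 = e := by
  simp [secretTagPoly, finsetSum_coeff, coeff_X_pow]

lemma coeff_secretTagPoly_add_two (d e : R) (S : Fin m → R) (k : Fin m) :
    (secretTagPoly d e S).coeff (k.1 + 2) = S k := by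
  simp [secretTagPoly, finsetSum_coeff, coeff_X_pow, Fin.val_inj]

lemma secretTagPoly_eq_zero_iff {d e : R} {S : Fin m → R} :
    secretTagPoly d e S = 0 ↔ d = 0 ∧ e = 0 ∧ S = 0 := by
  constructor
  · intro h
    refine ⟨?_, ?_, funext fun k => ?_⟩
    · simpa [h] using (coeff_secretTagPoly_zero d e S).symm
    · simpa [h] using (coeff_secretTagPoly_one d e S).symm
    · simpa [h] using (coeff_secretTagPoly_add_two d e S k).symm
  · rintro ⟨rfl, rfl, rfl⟩
    simp [secretTagPoly]

lemma natDegree_secretTagPoly_le (d e : R) (S : Fin m → R) :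
    (secretTagPoly d e S).natDegree ≤ m + 1 := by
  unfold secretTagPoly
  refine natDegree_add_le_of_degree_le (natDegree_add_le_of_degree_le ?_ ?_) ?_
  · simp
  · exact (natDegree_C_mul_le e X).trans (natDegree_X_le.trans (by omega))
  · refine natDegree_sum_le_of_forall_le _ _ fun j _ => ?_
    exact natDegree_C_mul_X_pow_le (S j) _ |>.trans (by omega)

end SecretTag

lemma card_filter_eval_fst_eq_zero_le {R β : Type*} [CommRing R] [IsDomain R] [Fintype R]
    [DecidableEq R] [Fintype β] {p : R[X]} (hp : p ≠ 0) :
    #{x : R × β | p.eval x.1 = 0} ≤ p.natDegree * Fintype.card β := by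
  calc #{x : R × β | p.eval x.1 = 0} ≤ #(p.roots.toFinset ×ˢ (univ : Finset β)) := by
        refine card_le_card fun x hx => ?_
        simp_all
    _ ≤ p.natDegree * Fintype.card β := by
        rw [card_product, card_univ]
        gcongr
        exact (Multiset.toFinset_card_le _).trans (card_roots' p)

lemma card_filter_le_of_unique_right {α β γ : Type*} [Fintype α] [Fintype β] [Fintype γ]
    (P : α × β × γ → Prop) [DecidablePred P]
    (hP : ∀ a b c c', P (a, b, c) → P (a, b, c') → c = c') :
    #{x | P x} ≤ Fintype.card α * Fintype.card β := by
  rw [← Fintype.card_prod, ← card_univ]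
  refine card_le_card_of_injOn (fun x => (x.1, x.2.1)) (fun _ _ => mem_univ _) ?_
  rintro ⟨a, b, c⟩ hx ⟨a', b', c'⟩ hx' h
  obtain ⟨rfl, rfl⟩ := Prod.mk.inj h
  simp only [coe_filter, mem_univ, true_and, Set.mem_ofPred_eq] at hx hx'
  rw [hP a b c c' hx hx']

theorem dske_secret_tag_shift_count_general {F : Type*} [Field F] [Fintype F]
    (m : ℕ) (S : Fin m → F)
    (Δ : F × F × F × (Fin m → F)) (hΔ : Δ ≠ 0) :
    Nat.card {cde : F × F × F //
      (cde.2.1 + Δ.2.1) + (cde.1 + Δ.1) * (cde.2.2 + Δ.2.2.1) +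
          ∑ j : Fin m, (cde.1 + Δ.1) ^ (j.1 + 2) * (S j + Δ.2.2.2 j) =
        cde.2.1 + cde.1 * cde.2.2 + ∑ j : Fin m, cde.1 ^ (j.1 + 2) * S j} ≤
      (m + 1) * Fintype.card F ^ 2 := by
  classical
  obtain ⟨Δc, Δd, Δe, ΔS⟩ := Δ
  change Nat.card {x : F × F × F // secretTag (x.1 + Δc) (x.2.1 + Δd) (x.2.2 + Δe) (S + ΔS) =
    secretTag x.1 x.2.1 x.2.2 S} ≤ _
  rw [Nat.card_eq_fintype_card, Fintype.card_subtype]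
  by_cases hΔc : Δc = 0
  · subst hΔc
    have hp : secretTagPoly Δd Δe ΔS ≠ 0 := by
      rw [Ne, secretTagPoly_eq_zero_iff]
      contrapose! hΔ
      simp [hΔ]
    simp_rw [add_zero, secretTag_add, add_eq_left, ← eval_secretTagPoly]
    calc _ ≤ (secretTagPoly Δd Δe ΔS).natDegree * Fintype.card (F × F) :=
          card_filter_eval_fst_eq_zero_le hp
      _ ≤ (m + 1) * Fintype.card F ^ 2 := by
          rw [Fintype.card_prod, ← sq]
          gcongr
          exact natDegree_secretTagPoly_le Δd Δe ΔS
  · calc _ ≤ Fintype.card F * Fintype.card F := by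
          refine card_filter_le_of_unique_right _ fun c d e e' h h' => ?_
          unfold secretTag at h h'
          exact mul_left_cancel₀ hΔc (by linear_combination h - h')
      _ ≤ (m + 1) * Fintype.card F ^ 2 := by
          rw [← sq]
          exact Nat.le_mul_of_pos_left _ m.succ_pos

/-- For a finite field `F`, a positive `m`, a fixed `S ∈ F^m` and a fixed nonzero shift
`Δ = (Δc, Δd, Δe, ΔS) ∈ F × F × F × F^m`, the number of triples `(c, d, e) ∈ F³` with
`h'_{c+Δc, d+Δd, e+Δe}(S + ΔS) = h'_{c,d,e}(S)`, where
`h'_{c,d,e}(S) = d + c·e + ∑_{j=1}^m c^{j+1} Sⱼ`, is at most `(m + 1)·|F|²`. -/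
theorem dske_secret_tag_shift_count {F : Type*} [Field F] [Fintype F]
    (m : ℕ) (hm : 0 < m) (S : Fin m → F)
    (Δ : F × F × F × (Fin m → F)) (hΔ : Δ ≠ 0) :
    Nat.card {cde : F × F × F //
      (cde.2.1 + Δ.2.1) + (cde.1 + Δ.1) * (cde.2.2 + Δ.2.2.1) +
          ∑ j : Fin m, (cde.1 + Δ.1) ^ (j.1 + 2) * (S j + Δ.2.2.2 j) =
        cde.2.1 + cde.1 * cde.2.2 + ∑ j : Fin m, cde.1 ^ (j.1 + 2) * S j} ≤
      (m + 1) * Fintype.card F ^ 2 :=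
  dske_secret_tag_shift_count_general m S Δ hΔ
end

section
/- Let F be a finite field, m a positive natural number, S ∈ F^m fixed, and let Δ^{(1)}, …, Δ^{(N)} ∈ F × F × F × F^m be N fixed nonzero shifts, where Δ^{(j)} = (Δ^{(j)}_c, Δ^{(j)}_d, Δ^{(j)}_e, Δ^{(j)}_S). If (c, d, e) is drawn uniformly at random from F³, then the probability that there exists some j ∈ {1, …, N} with h'_{c+Δ^{(j)}_c, d+Δ^{(j)}_d, e+Δ^{(j)}_e}(S + Δ^{(j)}_S) = h'_{c,d,e}(S) is at most min(N·(m+1)/|F|, 1). -/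
/-!
The difference between the shifted and the unshifted tag is `Δc · e + q(c)` for a polynomial `q`
of degree at most `m + 1` (the `d` cancels). If `Δc ≠ 0`, each `(c, d)` admits at most one `e`,
so at most `|F|²` triples collide. If `Δc = 0`, then `q = Δd + Δe X + ∑ ΔSᵢ X^{i+2}` is nonzero
because `Δ ≠ 0`, so `c` must be one of its at most `m + 1` roots. A union bound over the `N`
shifts gives at most `N (m + 1) |F|²` colliding triples out of `|F|³`.
-/

open Polynomial Finset

namespace Polynomial

variable {R : Type*} [CommSemiring R] [DecidableEq R]

theorem eval_ofFn {n : ℕ} (v : Fin n → R) (x : R) :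
    (ofFn n v).eval x = ∑ i, v i * x ^ (i : ℕ) := by
  simp [ofFn_eq_sum_monomial, eval_finsetSum]

end Polynomial

theorem Nat.card_subtype_exists_le {ι α : Type*} [Fintype ι] [Finite α] (P : ι → α → Prop) :
    Nat.card {x // ∃ i, P i x} ≤ ∑ i, Nat.card {x // P i x} := by
  classical
  have := Fintype.ofFinite α
  simp only [Nat.card_eq_fintype_card, Fintype.card_subtype]
  refine (card_le_card fun x hx => ?_).trans card_biUnion_le
  obtain ⟨i, hi⟩ := (mem_filter.1 hx).2
  exact mem_biUnion.2 ⟨i, mem_univ _, mem_filter.2 ⟨mem_univ _, hi⟩⟩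

theorem Nat.card_subtype_le_mul_of_subsingleton_fiber {α β γ : Type*} [Finite α] [Finite β]
    (P : α × β × γ → Prop) (h : ∀ a b, {c | P (a, b, c)}.Subsingleton) :
    Nat.card {x // P x} ≤ Nat.card α * Nat.card β := by
  rw [← Nat.card_prod]
  refine Nat.card_le_card_of_injective (fun x => (x.1.1, x.1.2.1)) ?_
  rintro ⟨⟨a, b, c⟩, hx⟩ ⟨⟨a', b', c'⟩, hx'⟩ hxx'
  obtain ⟨rfl, rfl⟩ := Prod.ext_iff.1 hxx'
  obtain rfl : c = c' := h a b hx hx'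
  rfl

theorem Polynomial.natCard_isRoot_fst_le {F β : Type*} [Field F] [Finite β] {p : F[X]}
    (hp : p ≠ 0) : Nat.card {x : F × β // p.IsRoot x.1} ≤ p.natDegree * Nat.card β := by
  classical
  calc Nat.card {x : F × β // p.IsRoot x.1} ≤ Nat.card (p.roots.toFinset × β) :=
        Nat.card_le_card_of_injective (fun x => (⟨x.1.1, by simpa [hp] using x.2⟩, x.1.2))
          fun x y h => by ext <;> simp_all [Prod.ext_iff]
    _ ≤ p.natDegree * Nat.card β := by
        rw [Nat.card_prod, Nat.card_eq_finsetCard]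
        gcongr
        exact (Multiset.toFinset_card_le _).trans p.card_roots'

section SecretAuthHash

variable {F : Type*} [Field F]

/-- `h'_{c,d,e}(S)`; the paper's `S_j` (`j = 1, …, m`) is `S (j - 1)`, hence exponent `i + 2`. -/
def secretAuthHash {m : ℕ} (c d e : F) (S : Fin m → F) : F :=
  d + c * e + ∑ i, c ^ (i.1 + 2) * S i

theorem secretAuthHash_add_sub {m : ℕ} (c d e a b b' : F) (S T : Fin m → F) :
    secretAuthHash (c + a) (d + b) (e + b') (S + T) - secretAuthHash c d e S =
      a * e + (b + (c + a) * b' +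
        ∑ i, ((c + a) ^ (i.1 + 2) * (S i + T i) - c ^ (i.1 + 2) * S i)) := by
  simp only [secretAuthHash, Pi.add_apply, sum_sub_distrib]
  ring

theorem secretAuthHash_add_sub_eq_eval_ofFn [DecidableEq F] {m : ℕ} (c d e b b' : F)
    (S T : Fin m → F) :
    secretAuthHash c (d + b) (e + b') (S + T) - secretAuthHash c d e S =
      (ofFn (m + 2) (Matrix.vecCons b (Matrix.vecCons b' T))).eval c := by
  simp only [secretAuthHash, eval_ofFn, Fin.sum_univ_succ, Pi.add_apply, Matrix.cons_val_zero,
    Matrix.cons_val_succ, Fin.val_zero, Fin.val_succ, mul_add, sum_add_distrib, add_assoc,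
    one_add_one_eq_two, mul_comm (T _)]
  ring

theorem natCard_secretAuthHash_collision_le [Fintype F] {m : ℕ} (S : Fin m → F)
    (Δ : F × F × F × (Fin m → F)) (hΔ : Δ ≠ 0) :
    Nat.card {x : F × F × F // secretAuthHash (x.1 + Δ.1) (x.2.1 + Δ.2.1) (x.2.2 + Δ.2.2.1)
      (S + Δ.2.2.2) = secretAuthHash x.1 x.2.1 x.2.2 S} ≤ (m + 1) * Fintype.card F ^ 2 := by
  classical
  obtain ⟨a, b, b', T⟩ := Δ
  rcases eq_or_ne a 0 with rfl | ha
  · set p := ofFn (m + 2) (Matrix.vecCons b (Matrix.vecCons b' T))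
    have hp : p ≠ 0 := by
      refine fun h => hΔ ?_
      rw [← (ofFn (m + 2)).map_zero] at h
      simpa [Matrix.cons_eq_zero_iff] using injective_ofFn _ h
    have hroot (x : F × F × F) : secretAuthHash (x.1 + 0) (x.2.1 + b) (x.2.2 + b') (S + T) =
        secretAuthHash x.1 x.2.1 x.2.2 S ↔ p.IsRoot x.1 := by
      rw [← sub_eq_zero, add_zero, secretAuthHash_add_sub_eq_eval_ofFn, IsRoot.def]
    calc _ = Nat.card {x : F × F × F // p.IsRoot x.1} :=
          Nat.card_congr (Equiv.subtypeEquivRight hroot)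
      _ ≤ p.natDegree * Nat.card (F × F) := natCard_isRoot_fst_le hp
      _ ≤ (m + 1) * Fintype.card F ^ 2 := by
        rw [Nat.card_prod, Nat.card_eq_fintype_card, ← sq]
        gcongr
        exact Nat.le_of_lt_succ (ofFn_natDegree_lt (by omega) _)
  · calc _ ≤ Nat.card F * Nat.card F := by
          refine Nat.card_subtype_le_mul_of_subsingleton_fiber _
            fun c d e₁ h₁ e₂ h₂ => mul_left_cancel₀ ha ?_
          have h₁ := sub_eq_zero.2 h₁
          have h₂ := sub_eq_zero.2 h₂
          rw [secretAuthHash_add_sub] at h₁ h₂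
          linear_combination h₁ - h₂
      _ ≤ (m + 1) * Fintype.card F ^ 2 := by
        rw [Nat.card_eq_fintype_card, ← sq]
        exact Nat.le_mul_of_pos_left _ m.succ_pos

end SecretAuthHash

theorem natCast_div_pow_three_le_min {k N m q : ℕ} (hq : 0 < q)
    (hunion : k ≤ N * ((m + 1) * q ^ 2)) (htotal : k ≤ q ^ 3) :
    (k : ℝ) / q ^ 3 ≤ min ((N : ℝ) * (m + 1) / q) 1 := by
  have hq : (0 : ℝ) < q := by exact_mod_cast hq
  refine le_min ?_ ((div_le_one (by positivity)).2 (by exact_mod_cast htotal))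
  rw [div_le_div_iff₀ (by positivity) hq]
  calc _ ≤ ((N * ((m + 1) * q ^ 2) : ℕ) : ℝ) * q :=
        mul_le_mul_of_nonneg_right (by exact_mod_cast hunion) hq.le
    _ = N * (m + 1) * q ^ 3 := by push_cast; ring

theorem dske_secret_tag_shift_union_bound_general {F : Type*} [Field F] [Fintype F]
    (m : ℕ) (S : Fin m → F) (N : ℕ)
    (Δ : Fin N → F × F × F × (Fin m → F)) (hΔ : ∀ j, Δ j ≠ 0) :
    (Nat.card {cde : F × F × F // ∃ j : Fin N,
        (cde.2.1 + (Δ j).2.1) + (cde.1 + (Δ j).1) * (cde.2.2 + (Δ j).2.2.1) +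
            ∑ i : Fin m, (cde.1 + (Δ j).1) ^ (i.1 + 2) * (S i + (Δ j).2.2.2 i) =
          cde.2.1 + cde.1 * cde.2.2 + ∑ i : Fin m, cde.1 ^ (i.1 + 2) * S i} : ℝ) /
        (Fintype.card F : ℝ) ^ 3 ≤
      min ((N : ℝ) * (m + 1) / Fintype.card F) 1 := by
  refine natCast_div_pow_three_le_min Fintype.card_pos ?_ <|
    (Finite.card_subtype_le _).trans_eq <| by
      rw [Nat.card_prod, Nat.card_prod, Nat.card_eq_fintype_card]; ring
  exact (Nat.card_subtype_exists_le _).trans <|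
    (sum_le_sum fun j _ => natCard_secretAuthHash_collision_le S (Δ j) (hΔ j)).trans_eq (by simp)

/-- For a finite field `F`, a positive `m`, a fixed `S ∈ F^m` and `N` fixed nonzero shifts
`Δ⁽¹⁾, …, Δ⁽ᴺ⁾ ∈ F × F × F × F^m`, the probability over a uniformly random
`(c, d, e) ∈ F³` that some shift passes validation, i.e. that there is a `j` with
`h'_{c+Δc⁽ʲ⁾, d+Δd⁽ʲ⁾, e+Δe⁽ʲ⁾}(S + ΔS⁽ʲ⁾) = h'_{c,d,e}(S)`, where
`h'_{c,d,e}(S) = d + c·e + ∑_{j=1}^m c^{j+1} Sⱼ`, is at most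
`min(N·(m+1)/|F|, 1)`. -/
theorem dske_secret_tag_shift_union_bound {F : Type*} [Field F] [Fintype F]
    (m : ℕ) (hm : 0 < m) (S : Fin m → F) (N : ℕ)
    (Δ : Fin N → F × F × F × (Fin m → F)) (hΔ : ∀ j, Δ j ≠ 0) :
    (Nat.card {cde : F × F × F // ∃ j : Fin N,
        (cde.2.1 + (Δ j).2.1) + (cde.1 + (Δ j).1) * (cde.2.2 + (Δ j).2.2.1) +
            ∑ i : Fin m, (cde.1 + (Δ j).1) ^ (i.1 + 2) * (S i + (Δ j).2.2.2 i) =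
          cde.2.1 + cde.1 * cde.2.2 + ∑ i : Fin m, cde.1 ^ (i.1 + 2) * S i} : ℝ) /
        (Fintype.card F : ℝ) ^ 3 ≤
      min ((N : ℝ) * (m + 1) / Fintype.card F) 1 :=
  dske_secret_tag_shift_union_bound_general m S N Δ hΔ
end

section
/- Let F be a finite field, k ≥ 1, 0 ≤ t ≤ k − 1, let x_0, x_1, …, x_t be pairwise distinct elements of F, let y_1, …, y_t ∈ F and let s ∈ F. Then the number of polynomials f over F of degree less than k satisfying f(x_0) = s and f(x_i) = y_i for all 1 ≤ i ≤ t equals |F|^{k−1−t}. In particular, this number does not depend on the secret s. -/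
/-!
Evaluation at `m` distinct nodes is a linear map from the `k`-dimensional space of polynomials
of degree `< k` onto `F^m`, surjective when `m ≤ k` by Lagrange interpolation. Every fiber is
then a translate of the kernel, which has dimension `k - m` and hence `|F|^(k - m)` elements,
whatever the prescribed values are.
-/

open Polynomial Module

namespace Polynomial

variable {F ι : Type*} [Field F]

noncomputable def degreeLTEval (k : ℕ) (x : ι → F) : degreeLT F k →ₗ[F] ι → F :=
  (LinearMap.pi fun i ↦ leval (x i)).comp (degreeLT F k).subtype

@[simp]
theorem degreeLTEval_apply (k : ℕ) (x : ι → F) (f : degreeLT F k) (i : ι) :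
    degreeLTEval k x f i = (f : F[X]).eval (x i) :=
  rfl

variable [Fintype ι] {k : ℕ} {x : ι → F}

theorem degreeLTEval_surjective (hx : Function.Injective x) (hk : Fintype.card ι ≤ k) :
    Function.Surjective (degreeLTEval k x) := by
  classical
  intro v
  have hdeg : (Lagrange.interpolate Finset.univ x v).degree < k :=
    (Lagrange.degree_interpolate_lt _ hx.injOn).trans_le (by simpa using hk)
  refine ⟨⟨_, mem_degreeLT.mpr hdeg⟩, ?_⟩
  ext i
  exact Lagrange.eval_interpolate_at_node _ hx.injOn (Finset.mem_univ i)

theorem finrank_ker_degreeLTEval (hx : Function.Injective x) (hk : Fintype.card ι ≤ k) :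
    finrank F (LinearMap.ker (degreeLTEval k x)) = k - Fintype.card ι := by
  have h := LinearMap.finrank_range_add_finrank_ker (degreeLTEval (F := F) k x)
  rw [LinearMap.range_eq_top.mpr (degreeLTEval_surjective hx hk), finrank_top,
    finrank_fintype_fun_eq_card, finrank_eq_card_basis (degreeLT.basis F k), Fintype.card_fin] at h
  omega

theorem ncard_setOf_degree_lt_eval_eq [Fintype F] (hx : Function.Injective x)
    (hk : Fintype.card ι ≤ k) (v : ι → F) :
    {f : F[X] | f.degree < k ∧ ∀ i, f.eval (x i) = v i}.ncard =
      Fintype.card F ^ (k - Fintype.card ι) := by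
  have hset : {f : F[X] | f.degree < k ∧ ∀ i, f.eval (x i) = v i} =
      Subtype.val '' (degreeLTEval k x ⁻¹' {v}) := by
    ext f
    simp [mem_degreeLT, funext_iff, and_comm]
  rw [hset, Set.ncard_image_of_injective _ Subtype.val_injective, ← Nat.card_coe_set_eq]
  refine (Nat.card_congr ((degreeLTEval k x).toAddMonoidHom.fiberEquivKerOfSurjective
      (degreeLTEval_surjective hx hk) v)).trans ?_
  rw [← finrank_ker_degreeLTEval hx hk, ← Nat.card_eq_fintype_card]
  exact natCard_eq_pow_finrank (K := F) (V := LinearMap.ker (degreeLTEval k x))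

end Polynomial

/-- Perfect privacy counting for Shamir's `(n, k)`-threshold scheme: over a finite field
`F`, for `k ≥ 1`, `t ≤ k - 1`, pairwise distinct points `x₀, x₁, …, x_t`, prescribed
share values `y₁, …, y_t ∈ F` and a secret `s ∈ F`, the number of polynomials `f` over
`F` of degree less than `k` with `f(x₀) = s` and `f(xᵢ) = yᵢ` for `1 ≤ i ≤ t` is exactly
`|F|^(k - 1 - t)`; in particular it does not depend on the secret `s`. -/
theorem dske_shamir_privacy_count {F : Type*} [Field F] [Fintype F]
    (k t : ℕ) (hk : 1 ≤ k) (ht : t ≤ k - 1)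
    (x : Fin (t + 1) → F) (hx : Function.Injective x)
    (y : Fin t → F) (s : F) :
    Set.ncard {f : Polynomial F | f.degree < (k : WithBot ℕ) ∧
        f.eval (x 0) = s ∧ ∀ i : Fin t, f.eval (x i.succ) = y i} =
      Fintype.card F ^ (k - 1 - t) := by
  have hnodes : Fintype.card (Fin (t + 1)) ≤ k := by
    rw [Fintype.card_fin]
    omega
  have hset : {f : F[X] | f.degree < k ∧
        f.eval (x 0) = s ∧ ∀ i : Fin t, f.eval (x i.succ) = y i} =
      {f : F[X] | f.degree < k ∧ ∀ i, f.eval (x i) = (Fin.cons s y : Fin (t + 1) → F) i} := by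
    simp only [Fin.forall_fin_succ, Fin.cons_zero, Fin.cons_succ]
  rw [hset, ncard_setOf_degree_lt_eval_eq hx hnodes, Fintype.card_fin, Nat.sub_sub, add_comm]
end

section
/- Let F be a finite field, k ≥ 1, and let x_0, x_1, …, x_{k−1} be pairwise distinct elements of F, and s ∈ F. If f is drawn uniformly at random from the (nonempty, finite) set of polynomials over F of degree less than k with f(x_0) = s, then the random vector (f(x_1), …, f(x_{k−1})) is uniformly distributed on F^{k−1}; in particular, its distribution does not depend on s. -/
/-- Perfect privacy of Shamir's `(n, k)`-threshold scheme against `k - 1` share holders: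
over a finite field `F`, for `k ≥ 1` and pairwise distinct points `x₀, x₁, …, x_{k-1}`,
if `f` is drawn uniformly at random from the (nonempty, finite) set of polynomials over
`F` of degree less than `k` with `f(x₀) = s` (here given as a finset `T`), then the
random vector `(f(x₁), …, f(x_{k-1}))` is uniformly distributed on `F^{k-1}`; in
particular its distribution does not depend on `s`. -/
theorem dske_shamir_privacy_uniform {F : Type*} [Field F] [Fintype F]
    (k : ℕ) (hk : 1 ≤ k)
    (x : Fin k → F) (hx : Function.Injective x) (s : F)
    (T : Finset (Polynomial F))
    (hT : ∀ f : Polynomial F,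
      f ∈ T ↔ (f.degree < (k : WithBot ℕ) ∧ f.eval (x ⟨0, by omega⟩) = s))
    (hTne : T.Nonempty) :
    (PMF.uniformOfFinset T hTne).map
        (fun f => fun i : Fin (k - 1) => f.eval (x (i.succ.cast (by omega)))) =
      PMF.uniformOfFintype (Fin (k - 1) → F) := by
  classical
  set g : Polynomial F → (Fin (k - 1) → F) :=
    fun f => fun i : Fin (k - 1) => f.eval (x (i.succ.cast (by omega))) with hg
  have hcard : (Finset.univ : Finset (Fin k)).card = k := by simp
  have hinjOn : Set.InjOn x (Finset.univ : Finset (Fin k)) := hx.injOn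
  -- uniqueness on T of polynomials with given shares
  have huniq : ∀ f₁ ∈ T, ∀ f₂ ∈ T, g f₁ = g f₂ → f₁ = f₂ := by
    intro f₁ h₁ f₂ h₂ hgf
    obtain ⟨hd₁, he₁⟩ := (hT f₁).1 h₁
    obtain ⟨hd₂, he₂⟩ := (hT f₂).1 h₂
    refine Polynomial.eq_of_degrees_lt_of_eval_index_eq (Finset.univ) hinjOn
      (by rwa [hcard]) (by rwa [hcard]) ?_
    intro i _
    rcases Nat.eq_zero_or_pos (i : ℕ) with h0 | hpos
    · have : i = ⟨0, by omega⟩ := Fin.ext h0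
      rw [this, he₁, he₂]
    · have hi1 : (i : ℕ) - 1 < k - 1 := by omega
      have : i = (Fin.succ ⟨(i : ℕ) - 1, hi1⟩).cast (by omega) := by
        apply Fin.ext
        simp [Fin.succ]
        omega
      rw [this]
      exact congrFun hgf ⟨(i : ℕ) - 1, hi1⟩
  -- existence: for every share vector there is some f ∈ T realizing it
  have hexist : ∀ v : Fin (k - 1) → F, ∃ f ∈ T, g f = v := by
    intro v
    set r : Fin k → F := fun i =>
      if h : (i : ℕ) = 0 then s else v ⟨(i : ℕ) - 1, by omega⟩ with hr
    refine ⟨Lagrange.interpolate Finset.univ x r, ?_, ?_⟩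
    · rw [hT]
      constructor
      · have := Lagrange.degree_interpolate_lt (s := (Finset.univ : Finset (Fin k))) r hinjOn
        rwa [hcard] at this
      · have := Lagrange.eval_interpolate_at_node (i := (⟨0, by omega⟩ : Fin k)) r hinjOn
          (Finset.mem_univ _)
        rw [this]
        simp [hr]
    · funext i
      have := Lagrange.eval_interpolate_at_node (i := (i.succ.cast (by omega) : Fin k)) r
        hinjOn (Finset.mem_univ _)
      simp only [hg]
      rw [this, hr]
      have : ((i.succ.cast (by omega) : Fin k) : ℕ) = (i : ℕ) + 1 := by simp
      simp only [this]
      simp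
  -- the fibers of g over T are singletons, hence card T = card of function space
  have hTcard : T.card = Fintype.card (Fin (k - 1) → F) := by
    rw [← Finset.card_univ]
    apply Finset.card_bij (fun f _ => g f)
    · intro f hf; exact Finset.mem_univ _
    · intro f₁ h₁ f₂ h₂ h; exact huniq f₁ h₁ f₂ h₂ h
    · intro v _; obtain ⟨f, hf, hgf⟩ := hexist v; exact ⟨f, hf, hgf⟩
  ext v
  obtain ⟨f₀, hf₀, hgf₀⟩ := hexist v
  rw [PMF.map_apply, PMF.uniformOfFintype_apply]
  rw [tsum_eq_single f₀ ?_]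
  · rw [if_pos hgf₀.symm, PMF.uniformOfFinset_apply_of_mem hTne hf₀, hTcard]
  · intro b hb
    by_cases hbT : b ∈ T
    · rw [if_neg]
      intro hvb
      exact hb (huniq b hbT f₀ hf₀ (hvb.symm.trans hgf₀.symm))
    · simp [PMF.uniformOfFinset_apply_of_notMem hTne hbT]
end

section
/- Let F be a finite field, k ≤ n, x_0, x_1, …, x_n pairwise distinct elements of F, f_1, …, f_{m'} polynomials over F each of degree less than k, and B ⊆ {1, …, n} with |B| ≤ n − k. Suppose that for every i ∉ B the received share is Y_i = (f_1(x_i), …, f_{m'}(x_i)). Then there exists J ⊆ {1, …, n} ∖ B with |J| = k, and for every such J, any tuple of polynomials (g_1, …, g_{m'}) over F of degree less than k with g_l(x_i) = (Y_i)_l for all i ∈ J and all l satisfies g_l(x_0) = f_l(x_0) for all l; i.e., reconstruction from any k uncorrupted shares recovers the true secret. -/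
/-! Outside `B` the received shares are the true evaluations, and two polynomials of degree
less than `k` that agree at `k` distinct points coincide; so any `k` honest shares determine
every `f l`, in particular its value at `x 0`. -/

open Finset

theorem Finset.exists_disjoint_card_eq {α : Type*} [Fintype α] [DecidableEq α] {k : ℕ}
    (B : Finset α) (h : k + #B ≤ Fintype.card α) : ∃ J : Finset α, Disjoint J B ∧ #J = k := by
  have hk : k ≤ #Bᶜ := by rw [card_compl]; omega
  obtain ⟨J, hJB, hJk⟩ := exists_subset_card_eq hk
  exact ⟨J, disjoint_of_subset_left hJB disjoint_compl_left, hJk⟩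

theorem dske_shamir_robust_reconstruction_general {F : Type*} [Field F]
    (n k m' : ℕ) (hkn : k ≤ n)
    (x : Fin (n + 1) → F) (hx : Function.Injective x)
    (f : Fin m' → Polynomial F) (hf : ∀ l, (f l).degree < (k : WithBot ℕ))
    (B : Finset (Fin n)) (hB : B.card ≤ n - k)
    (Y : Fin n → Fin m' → F)
    (hY : ∀ i ∉ B, ∀ l, Y i l = (f l).eval (x i.succ)) :
    (∃ J : Finset (Fin n), Disjoint J B ∧ J.card = k) ∧
      ∀ J : Finset (Fin n), Disjoint J B → J.card = k →
        ∀ g : Fin m' → Polynomial F, (∀ l, (g l).degree < (k : WithBot ℕ)) →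
          (∀ l, ∀ i ∈ J, (g l).eval (x i.succ) = Y i l) →
          ∀ l, (g l).eval (x 0) = (f l).eval (x 0) := by
  refine ⟨B.exists_disjoint_card_eq (by rw [Fintype.card_fin]; omega), ?_⟩
  intro J hJB hJk g hg hgY l
  have hinj : Set.InjOn (fun i : Fin n ↦ x i.succ) J := (hx.comp (Fin.succ_injective n)).injOn
  have hgf : g l = f l :=
    Polynomial.eq_of_degrees_lt_of_eval_index_eq J hinj (hJk ▸ hg l) (hJk ▸ hf l)
      fun i hi ↦ (hgY l i hi).trans (hY i (disjoint_left.mp hJB hi) l)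
  rw [hgf]

/-- Robust reconstruction for `m'` parallel executions of Shamir's `(n, k)`-threshold
scheme over a finite field `F`: with pairwise distinct points `x₀, x₁, …, xₙ`, true
polynomials `f₁, …, f_{m'}` of degree less than `k`, and a set `B` of corrupted indices
of size at most `n - k`, if the received share `Yᵢ` is correct for every `i ∉ B`, then
there exists a `k`-subset of uncorrupted indices, and reconstruction from any `k`
uncorrupted shares recovers the true secret `(f₁(x₀), …, f_{m'}(x₀))`. -/
theorem dske_shamir_robust_reconstruction {F : Type*} [Field F] [Fintype F]
    (n k m' : ℕ) (hk : 0 < k) (hkn : k ≤ n) (hm' : 0 < m')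
    (x : Fin (n + 1) → F) (hx : Function.Injective x)
    (f : Fin m' → Polynomial F) (hf : ∀ l, (f l).degree < (k : WithBot ℕ))
    (B : Finset (Fin n)) (hB : B.card ≤ n - k)
    (Y : Fin n → Fin m' → F)
    (hY : ∀ i ∉ B, ∀ l, Y i l = (f l).eval (x i.succ)) :
    (∃ J : Finset (Fin n), Disjoint J B ∧ J.card = k) ∧
      ∀ J : Finset (Fin n), Disjoint J B → J.card = k →
        ∀ g : Fin m' → Polynomial F, (∀ l, (g l).degree < (k : WithBot ℕ)) →
          (∀ l, ∀ i ∈ J, (g l).eval (x i.succ) = Y i l) →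
          ∀ l, (g l).eval (x 0) = (f l).eval (x 0) :=
  dske_shamir_robust_reconstruction_general n k m' hkn x hx f hf B hB Y hY
end
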